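/- For every α ∈ ℝ and for all sufficiently large t > 0 there exist integers p and q with 1 ≤ q < t·√(2/√3) such that (αq − p)²·t² + q²/t² < 2/√3; equivalently, the inequality ⟨αq⟩ < (1/t)·√(2/√3 − (q/t)²) is solvable in positive integers q for all large t. -/

import Mathlib

/-!
Write the expression as the positive definite binary quadratic form
`(α² t² + t⁻²) q² − 2 α t² q p + t² p²` of determinant `1`. Lagrange–Gauss reduction of a
minimal vector `v` to a basis `(v, w)` with `|2 B(v, w)| ≤ Q(v) ≤ Q(w)` gives Hermite's bound
`3 Q(v)² ≤ 4`. Equality forces `Q = Q(v) (x² ± x y + y²)` in that basis, so every value of `Q` is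
an integral multiple of `Q(v)`, which makes the ratio `−α` of two coefficients rational. For
rational `α = r` the pair `(r.den, r.num)` works once `t ≥ r.den`.
-/

open Real

namespace BinaryForm

variable (a b c : ℝ)

def eval (v : ℤ × ℤ) : ℝ := a * v.1 ^ 2 + 2 * b * v.1 * v.2 + c * v.2 ^ 2

def polar (v w : ℤ × ℤ) : ℝ := a * v.1 * w.1 + b * (v.1 * w.2 + v.2 * w.1) + c * v.2 * w.2

def det (v w : ℤ × ℤ) : ℤ := v.1 * w.2 - v.2 * w.1

variable {a b c}

lemma eval_smul_add_smul (x y : ℤ) (v w : ℤ × ℤ) :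
    eval a b c (x • v + y • w) =
      x ^ 2 * eval a b c v + 2 * x * y * polar a b c v w + y ^ 2 * eval a b c w := by
  simp only [eval, polar, Prod.fst_add, Prod.snd_add, Prod.smul_fst, Prod.smul_snd, smul_eq_mul]
  push_cast; ring

lemma eval_smul (g : ℤ) (v : ℤ × ℤ) : eval a b c (g • v) = g ^ 2 * eval a b c v := by
  simpa using eval_smul_add_smul (a := a) (b := b) (c := c) g 0 v 0

lemma eval_neg (v : ℤ × ℤ) : eval a b c (-v) = eval a b c v := by
  simpa using eval_smul (a := a) (b := b) (c := c) (-1) v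

lemma polar_sub_smul (k : ℤ) (v w : ℤ × ℤ) :
    polar a b c v (w - k • v) = polar a b c v w - k * eval a b c v := by
  simp only [eval, polar, Prod.fst_sub, Prod.snd_sub, Prod.smul_fst, Prod.smul_snd, smul_eq_mul]
  push_cast; ring

lemma eval_mul_eval_sub_polar_sq (v w : ℤ × ℤ) :
    eval a b c v * eval a b c w - polar a b c v w ^ 2 = (a * c - b ^ 2) * det v w ^ 2 := by
  simp only [eval, polar, det]; push_cast; ring

lemma mul_eval_eq_sq_add (v : ℤ × ℤ) :
    c * eval a b c v = (b * v.1 + c * v.2) ^ 2 + (a * c - b ^ 2) * v.1 ^ 2 := by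
  simp only [eval]; ring

lemma det_sub_smul (k : ℤ) (v w : ℤ × ℤ) : det v (w - k • v) = det v w := by
  simp only [det, Prod.fst_sub, Prod.snd_sub, Prod.smul_fst, Prod.smul_snd, smul_eq_mul]; ring

lemma eq_det_smul_add_det_smul {v w : ℤ × ℤ} (h : det v w = 1) (u : ℤ × ℤ) :
    u = det u w • v + det v u • w := by
  simp only [det] at h ⊢
  ext <;> simp only [Prod.fst_add, Prod.snd_add, Prod.smul_fst, Prod.smul_snd, smul_eq_mul]
  · linear_combination -u.1 * h
  · linear_combination -u.2 * h

lemma eval_pos (hc : 0 < c) (hD : 0 < a * c - b ^ 2) {v : ℤ × ℤ} (hv : v ≠ 0) :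
    0 < eval a b c v := by
  refine pos_of_mul_pos_right ?_ hc.le
  rw [mul_eval_eq_sq_add]
  rcases eq_or_ne v.1 0 with h₁ | h₁
  · have h₂ : v.2 ≠ 0 := fun h₂ => hv (Prod.ext h₁ h₂)
    rw [h₁, Int.cast_zero, mul_zero, zero_add]
    positivity
  · have : (0 : ℝ) < (a * c - b ^ 2) * v.1 ^ 2 := by positivity
    positivity

lemma finite_setOf_eval_le (hc : 0 < c) (hD : 0 < a * c - b ^ 2) (R : ℝ) :
    {v | eval a b c v ≤ R}.Finite := by
  have ha : 0 < a := by nlinarith [sq_nonneg b]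
  set N : ℤ := ⌈(a + c) * |R| / (a * c - b ^ 2)⌉
  have hN : ∀ x : ℤ, (a * c - b ^ 2) * x ^ 2 ≤ (a + c) * |R| → x ∈ Set.Icc (-N) N := by
    intro x hx
    have : (x : ℝ) ^ 2 ≤ N := ((le_div_iff₀' hD).2 hx).trans (Int.le_ceil _)
    rw [Set.mem_Icc, ← abs_le]
    exact (Int.natCast_natAbs x ▸ Int.natAbs_le_self_sq x).trans (by exact_mod_cast this)
  refine ((Set.finite_Icc (-N) N).prod (Set.finite_Icc (-N) N)).subset
    fun v hv => ⟨hN _ ?_, hN _ ?_⟩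
  · have hv : c * eval a b c v ≤ c * R := mul_le_mul_of_nonneg_left hv hc.le
    nlinarith [mul_eval_eq_sq_add (a := a) (b := b) (c := c) v, le_abs_self R, abs_nonneg R]
  · have hv : a * eval a b c v ≤ a * R := mul_le_mul_of_nonneg_left hv ha.le
    have : a * eval a b c v = (a * v.1 + b * v.2) ^ 2 + (a * c - b ^ 2) * v.2 ^ 2 := by
      simp only [eval]; ring
    nlinarith [le_abs_self R, abs_nonneg R]

lemma exists_eval_min (hc : 0 < c) (hD : 0 < a * c - b ^ 2) :
    ∃ v ≠ 0, ∀ w ≠ 0, eval a b c v ≤ eval a b c w := by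
  have h₁₀ : ((1, 0) : ℤ × ℤ) ≠ 0 := by simp
  obtain ⟨v, ⟨hv, -⟩, hmin⟩ :=
    Set.exists_min_image {v | v ≠ 0 ∧ eval a b c v ≤ eval a b c (1, 0)} (eval a b c)
      ((finite_setOf_eval_le hc hD _).subset fun v hv => hv.2) ⟨(1, 0), h₁₀, le_rfl⟩
  refine ⟨v, hv, fun w hw => ?_⟩
  by_cases h : eval a b c w ≤ eval a b c (1, 0)
  · exact hmin w ⟨hw, h⟩
  · exact (hmin (1, 0) ⟨h₁₀, le_rfl⟩).trans (not_le.1 h).le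

lemma isCoprime_of_eval_min (hc : 0 < c) (hD : 0 < a * c - b ^ 2) {v : ℤ × ℤ} (hv : v ≠ 0)
    (hmin : ∀ w ≠ 0, eval a b c v ≤ eval a b c w) : IsCoprime v.1 v.2 := by
  rw [Int.isCoprime_iff_gcd_eq_one]
  set g := Int.gcd v.1 v.2
  have hg : g ≠ 0 := fun h => hv (Prod.ext (Int.gcd_eq_zero_iff.1 h).1 (Int.gcd_eq_zero_iff.1 h).2)
  obtain ⟨x, hx⟩ := Int.gcd_dvd_left v.1 v.2
  obtain ⟨y, hy⟩ := Int.gcd_dvd_right v.1 v.2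
  have hvg : v = (g : ℤ) • (x, y) := Prod.ext hx hy
  have hxy : (x, y) ≠ 0 := by rintro h; rw [h, smul_zero] at hvg; exact hv hvg
  have hle := hmin _ hxy
  rw [hvg, eval_smul] at hle
  have hpos := eval_pos hc hD hxy
  push_cast at hle
  have : (g : ℝ) ^ 2 ≤ 1 := le_of_mul_le_mul_right (by rwa [one_mul]) hpos
  have : g ≤ 1 := by exact_mod_cast (pow_le_one_iff_of_nonneg g.cast_nonneg two_ne_zero).1 this
  omega

lemma exists_reduced_basis (hc : 0 < c) (hD : 0 < a * c - b ^ 2) :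
    ∃ v w : ℤ × ℤ, det v w = 1 ∧ 0 < eval a b c v ∧ eval a b c v ≤ eval a b c w ∧
      |2 * polar a b c v w| ≤ eval a b c v := by
  obtain ⟨v, hv, hmin⟩ := exists_eval_min hc hD
  obtain ⟨s, r, hsr⟩ := isCoprime_of_eval_min hc hD hv hmin
  set m := eval a b c v
  have hm : 0 < m := eval_pos hc hD hv
  set k := round (polar a b c v (-r, s) / m)
  have hdet : det v ((-r, s) - k • v) = 1 := by
    rw [det_sub_smul]; simp only [det]; linarith
  refine ⟨v, (-r, s) - k • v, hdet, hm, hmin _ ?_, ?_⟩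
  · rintro h; rw [h] at hdet; simp [det] at hdet
  · have := abs_sub_round (polar a b c v (-r, s) / m)
    rw [polar_sub_smul, show polar a b c v (-r, s) - k * m
      = m * (polar a b c v (-r, s) / m - k) by field_simp, ← mul_assoc, abs_mul,
      abs_of_pos (by positivity)]
    nlinarith

lemma exists_eval_eq_mul_of_det_eq_one {v w : ℤ × ℤ} (hdet : det v w = 1) {m : ℝ}
    {n₁ n₂ n₃ : ℤ} (h₁ : eval a b c v = m * n₁) (h₂ : 2 * polar a b c v w = m * n₂)
    (h₃ : eval a b c w = m * n₃) (u : ℤ × ℤ) : ∃ n : ℤ, eval a b c u = m * n := by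
  set x := det u w
  set y := det v u
  refine ⟨x ^ 2 * n₁ + x * y * n₂ + y ^ 2 * n₃, ?_⟩
  rw [eq_det_smul_add_det_smul hdet u, eval_smul_add_smul]
  push_cast
  linear_combination (x : ℝ) ^ 2 * h₁ + (x : ℝ) * y * h₂ + (y : ℝ) ^ 2 * h₃

lemma not_irrational_div_of_forall_eval_eq_mul (hc : c ≠ 0) {m : ℝ}
    (h : ∀ u, ∃ n : ℤ, eval a b c u = m * n) : ¬ Irrational (b / c) := by
  obtain ⟨n₁, h₁⟩ := h (1, 0)
  obtain ⟨n₂, h₂⟩ := h (0, 1)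
  obtain ⟨n₃, h₃⟩ := h (1, 1)
  simp only [eval, Int.cast_one, Int.cast_zero] at h₁ h₂ h₃
  have hn₂ : (n₂ : ℝ) ≠ 0 := by rintro h; rw [h] at h₂; simp_all
  have : b / c = (((n₃ - n₁ - n₂ : ℚ) / (2 * n₂) : ℚ) : ℝ) := by
    push_cast
    rw [div_eq_div_iff hc (by positivity)]
    linear_combination n₂ * h₃ - n₂ * h₁ - n₂ * h₂ - (n₃ - n₁ - n₂ : ℝ) * h₂
  rw [this]
  exact Rat.not_irrational _

theorem exists_three_mul_eval_sq_lt (hc : 0 < c) (hD : 0 < a * c - b ^ 2)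
    (hirr : Irrational (b / c)) : ∃ v ≠ 0, 3 * eval a b c v ^ 2 < 4 * (a * c - b ^ 2) := by
  obtain ⟨v, w, hdet, hm, hvw, hred⟩ := exists_reduced_basis hc hD
  refine ⟨v, by rintro rfl; simp [det] at hdet, ?_⟩
  have hgram := eval_mul_eval_sub_polar_sq (a := a) (b := b) (c := c) v w
  rw [hdet, Int.cast_one, one_pow, mul_one] at hgram
  have hB : (2 * polar a b c v w) ^ 2 ≤ eval a b c v ^ 2 :=
    sq_le_sq' (abs_le.1 hred).1 (abs_le.1 hred).2
  refine lt_of_le_of_ne (by nlinarith) fun heq => ?_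
  -- equality in Hermite's bound: `Q(w) = Q(v)` and `2 B(v, w) = ± Q(v)`
  have hw : eval a b c w = eval a b c v := by
    nlinarith [mul_nonneg hm.le (sub_nonneg.2 hvw)]
  obtain ⟨s, hs⟩ : ∃ s : ℤ, 2 * polar a b c v w = eval a b c v * s := by
    have hB' : (2 * polar a b c v w) ^ 2 = eval a b c v ^ 2 := by nlinarith
    rcases sq_eq_sq_iff_eq_or_eq_neg.1 hB' with h | h
    exacts [⟨1, by simp [h]⟩, ⟨-1, by simp [h]⟩]
  exact not_irrational_div_of_forall_eval_eq_mul hc.ne'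
    (exists_eval_eq_mul_of_det_eq_one hdet (n₁ := 1) (n₃ := 1) (by simp) hs (by simp [hw])) hirr

end BinaryForm

open BinaryForm

lemma lt_two_div_sqrt_three_of_three_mul_sq_lt {x : ℝ} (h : 3 * x ^ 2 < 4) : x < 2 / √3 := by
  rw [lt_div_iff₀ (by positivity)]
  have : (x * √3) ^ 2 < 2 ^ 2 := by
    rw [mul_pow, Real.sq_sqrt (by norm_num)]; linarith
  exact (le_abs_self _).trans_lt (abs_lt_of_sq_lt_sq this zero_le_two)

lemma lt_mul_sqrt_of_sq_div_sq_lt {x t s : ℝ} (ht : 0 < t) (h : x ^ 2 / t ^ 2 < s) :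
    x < t * √s := by
  rw [← div_lt_iff₀' ht]
  exact Real.lt_sqrt_of_sq_lt (by rwa [div_pow])

lemma exists_pos_sq_mul_add_sq_div_lt_of_irrational {α t : ℝ} (hα : Irrational α) (ht : 2 ≤ t) :
    ∃ q p : ℤ, 1 ≤ q ∧ (α * q - p) ^ 2 * t ^ 2 + (q : ℝ) ^ 2 / t ^ 2 < 2 / √3 := by
  have ht0 : t ≠ 0 := by positivity
  have heval (v : ℤ × ℤ) : eval (α ^ 2 * t ^ 2 + 1 / t ^ 2) (-(α * t ^ 2)) (t ^ 2) v =
      (α * v.1 - v.2) ^ 2 * t ^ 2 + (v.1 : ℝ) ^ 2 / t ^ 2 := by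
    simp only [eval]; field_simp; ring
  have hD : (α ^ 2 * t ^ 2 + 1 / t ^ 2) * t ^ 2 - (-(α * t ^ 2)) ^ 2 = 1 := by
    field_simp; ring
  have hirr : Irrational (-(α * t ^ 2) / t ^ 2) := by
    rw [neg_div, mul_div_assoc, div_self (by positivity), mul_one]; exact hα.neg
  obtain ⟨v, hv, hlt⟩ :=
    exists_three_mul_eval_sq_lt (by positivity) (by rw [hD]; exact one_pos) hirr
  rw [hD] at hlt
  have hv₁ : v.1 ≠ 0 := by
    intro h₁
    have h₂ : (1 : ℤ) ≤ v.2 ^ 2 :=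
      (one_le_sq_iff_one_le_abs _).2 (Int.one_le_abs fun h₂ => hv (Prod.ext h₁ h₂))
    have h₂t : 4 ≤ (v.2 : ℝ) ^ 2 * t ^ 2 := by
      have : (1 : ℝ) ≤ (v.2 : ℝ) ^ 2 := by exact_mod_cast h₂
      nlinarith
    rw [heval, h₁] at hlt
    push_cast at hlt
    rw [show (α * 0 - (v.2 : ℝ)) ^ 2 * t ^ 2 + 0 ^ 2 / t ^ 2 = v.2 ^ 2 * t ^ 2 by ring] at hlt
    nlinarith
  obtain ⟨u, hu₁, hu⟩ : ∃ u : ℤ × ℤ, 0 < u.1 ∧ eval _ _ _ u = eval _ _ _ v := by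
    rcases hv₁.lt_or_gt with h | h
    exacts [⟨-v, by simpa using h, eval_neg v⟩, ⟨v, h, rfl⟩]
  refine ⟨u.1, u.2, hu₁, ?_⟩
  rw [← heval, hu]
  exact lt_two_div_sqrt_three_of_three_mul_sq_lt (by linarith)

theorem euclidean_Dirichlet_critical (α : ℝ) :
    ∃ T : ℝ, ∀ t : ℝ, T ≤ t →
      ∃ q p : ℤ, 1 ≤ q ∧ (q : ℝ) < t * Real.sqrt (2 / Real.sqrt 3) ∧
        (α * q - p) ^ 2 * t ^ 2 + (q : ℝ) ^ 2 / t ^ 2 < 2 / Real.sqrt 3 := by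
  suffices h : ∃ T > 0, ∀ t : ℝ, T ≤ t → ∃ q p : ℤ, 1 ≤ q ∧
      (α * q - p) ^ 2 * t ^ 2 + (q : ℝ) ^ 2 / t ^ 2 < 2 / Real.sqrt 3 by
    obtain ⟨T, hT, hT'⟩ := h
    refine ⟨T, fun t ht => ?_⟩
    obtain ⟨q, p, hq, hlt⟩ := hT' t ht
    refine ⟨q, p, hq, lt_mul_sqrt_of_sq_div_sq_lt (hT.trans_le ht) ?_, hlt⟩
    exact (le_add_of_nonneg_left (by positivity)).trans_lt hlt
  by_cases hα : Irrational α
  · exact ⟨2, two_pos, fun t ht => exists_pos_sq_mul_add_sq_div_lt_of_irrational hα ht⟩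
  obtain ⟨r, rfl⟩ := not_not.1 hα
  refine ⟨r.den, Nat.cast_pos.2 r.pos, fun t ht => ⟨r.den, r.num, by exact_mod_cast r.pos, ?_⟩⟩
  have hexact : (r : ℝ) * r.den - r.num = 0 := by
    rw [sub_eq_zero]; exact_mod_cast Rat.mul_den_eq_num r
  have hle : (r.den : ℝ) ^ 2 / t ^ 2 ≤ 1 := by
    rw [div_le_one (pow_pos ((Nat.cast_pos.2 r.pos).trans_le ht) 2)]
    exact pow_le_pow_left₀ (by positivity) ht 2
  push_cast
  rw [hexact]
  have hnonneg : 0 ≤ (r.den : ℝ) ^ 2 / t ^ 2 := by positivity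
  exact lt_two_div_sqrt_three_of_three_mul_sq_lt (by nlinarith)
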